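/- Let f, g be pure (real part zero) quaternions with f² = g² = −1, let h : (0,∞) × ℝ → ℍ be 2π-periodic in its second argument and integrable over (0,∞) × (0,2π) with respect to dθ dr/r, let a > 0 and 0 ≤ φ ≤ 2π, and set m(r,θ) = h(ar, θ + φ). Then the magnitude of the Clifford Fourier–Mellin transform is invariant under this scaling and rotation: |M{m}(v,k)| = |M{h}(v,k)| for all v ∈ ℝ and k ∈ ℤ. -/

import Mathlib

open Quaternion MeasureTheory Real

/-- The measure `dθ dr/r` on `(0,∞) × (0,2π) ⊆ ℝ × ℝ`, first coordinate `r`,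
second coordinate `θ`. -/
noncomputable def mellinMeasure : Measure (ℝ × ℝ) :=
  ((volume.restrict (Set.Ioi (0 : ℝ))).withDensity fun r => ENNReal.ofReal r⁻¹).prod
    (volume.restrict (Set.Ioo (0 : ℝ) (2 * π)))

/-- The Clifford Fourier–Mellin transform of a quaternion-valued signal. -/
noncomputable def CFMT (f g : ℍ[ℝ]) (h : ℝ × ℝ → ℍ[ℝ]) (v : ℝ) (k : ℤ) : ℍ[ℝ] :=
  (2 * π)⁻¹ •
    ∫ p, NormedSpace.exp ((-(v * Real.log p.1)) • f) * h p *
      NormedSpace.exp ((-((k : ℝ) * p.2)) • g) ∂mellinMeasure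

/-! The measure `dr/r` on `(0, ∞)` is the image of Lebesgue measure under `exp`, hence invariant
under dilations `r ↦ a r`; Lebesgue measure on `(0, 2π]` is the image of the Haar measure of
`ℝ/2πℤ`, hence invariant under the rotation `θ ↦ θ + φ mod 2π`. So for integrands that are
`2π`-periodic in `θ` (the CFMT integrand is, because `exp (2π • g) = 1`), integration against
`mellinMeasure` is invariant under `(r, θ) ↦ (a r, θ + φ)`. Since `exp ((s + t) • q) =
exp (s • q) * exp (t • q)`, the integrand of `M{h}` at `(a r, θ + φ)` equals
`exp (-(v log a) • f) * (integrand of M{m} at (r, θ)) * exp (-(k φ) • g)`, and the two outer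
factors are unit quaternions because `f` and `g` are pure.
-/

open Function Set NormedSpace

noncomputable def mulHaarIoi : Measure ℝ :=
  (volume.restrict (Ioi 0)).withDensity fun r => ENNReal.ofReal r⁻¹

instance : SFinite mulHaarIoi := by
  unfold mulHaarIoi
  infer_instance

theorem map_exp_volume : volume.map Real.exp = mulHaarIoi := by
  ext s hs
  have himage : Real.exp '' (Real.exp ⁻¹' s) = s ∩ Ioi 0 := by
    rw [image_preimage_eq_inter_range, Real.range_exp]
  have hjac (x : ℝ) : ENNReal.ofReal |Real.exp x| * ENNReal.ofReal (Real.exp x)⁻¹ = 1 := by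
    rw [abs_of_pos (Real.exp_pos x), ← ENNReal.ofReal_mul (Real.exp_pos x).le,
      mul_inv_cancel₀ (Real.exp_pos x).ne', ENNReal.ofReal_one]
  rw [Measure.map_apply measurable_exp hs, mulHaarIoi, withDensity_apply _ hs,
    Measure.restrict_restrict hs, ← himage,
    lintegral_image_eq_lintegral_abs_deriv_mul (measurable_exp hs)
      (fun x _ => (Real.hasDerivAt_exp x).hasDerivWithinAt) Real.exp_injective.injOn]
  simp only [hjac, lintegral_one, Measure.restrict_apply_univ]

theorem measurePreserving_const_mul_mulHaarIoi {a : ℝ} (ha : 0 < a) :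
    MeasurePreserving (a * ·) mulHaarIoi mulHaarIoi := by
  refine ⟨measurable_const_mul a, ?_⟩
  have hconj : (a * ·) ∘ Real.exp = Real.exp ∘ (· + Real.log a) := by
    funext x
    simp [Real.exp_add, Real.exp_log ha, mul_comm]
  rw [← map_exp_volume, Measure.map_map (measurable_const_mul a) measurable_exp, hconj,
    ← Measure.map_map measurable_exp (measurable_add_const _), map_add_right_eq_self]

section Rotation

variable (T : ℝ) [Fact (0 < T)]

noncomputable def rotateIoc (φ ψ : ℝ) : ℝ :=
  AddCircle.equivIoc T 0 ((ψ : AddCircle T) + φ)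

theorem measurePreserving_rotateIoc (φ : ℝ) :
    MeasurePreserving (rotateIoc T φ) (volume.restrict (Ioo 0 T)) (volume.restrict (Ioo 0 T)) := by
  have h := (measurePreserving_subtype_coe measurableSet_Ioc).comp
    ((AddCircle.measurePreserving_equivIoc T (a := 0)).comp
      ((measurePreserving_add_right volume (φ : AddCircle T)).comp
        (AddCircle.measurePreserving_mk T 0)))
  have hIoc : Ioc 0 T = Ioc 0 (0 + T) := by rw [zero_add]
  rwa [Measure.restrict_congr_set Ioo_ae_eq_Ioc, hIoc]

variable {T}

theorem Function.Periodic.apply_rotateIoc {α : Type*} {F : ℝ → α} (hF : Periodic F T)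
    (φ ψ : ℝ) : F (rotateIoc T φ ψ) = F (ψ + φ) := by
  rw [← hF.lift_coe, ← hF.lift_coe, rotateIoc, AddCircle.coe_equivIoc, AddCircle.coe_add]

end Rotation

theorem ae_fst_pos_mellinMeasure : ∀ᵐ p ∂mellinMeasure, 0 < p.1 :=
  Measure.quasiMeasurePreserving_fst.ae
    ((withDensity_absolutelyContinuous _ _).ae_le (ae_restrict_mem measurableSet_Ioi))

theorem integral_mellinMeasure_comp_mul_add {E : Type*} [NormedAddCommGroup E]
    [NormedSpace ℝ E] {G : ℝ × ℝ → E} (hG : AEStronglyMeasurable G mellinMeasure)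
    (hper : ∀ r, Periodic (fun θ => G (r, θ)) (2 * π)) {a : ℝ} (ha : 0 < a) (φ : ℝ) :
    ∫ p, G (a * p.1, p.2 + φ) ∂mellinMeasure = ∫ p, G p ∂mellinMeasure := by
  have : Fact (0 < 2 * π) := ⟨two_pi_pos⟩
  have hU : MeasurePreserving (Prod.map (a * ·) (rotateIoc (2 * π) φ))
      mellinMeasure mellinMeasure :=
    (measurePreserving_const_mul_mulHaarIoi ha).prod (measurePreserving_rotateIoc _ φ)
  calc ∫ p, G (a * p.1, p.2 + φ) ∂mellinMeasure
      = ∫ p, G (Prod.map (a * ·) (rotateIoc (2 * π) φ) p) ∂mellinMeasure := by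
        simp only [Prod.map, (hper _).apply_rotateIoc]
    _ = ∫ p, G p ∂mellinMeasure := by
        rw [← integral_map hU.aemeasurable (hU.map_eq.symm ▸ hG), hU.map_eq]

theorem integral_const_mul_mul_const_of_isUnit {X A : Type*} [MeasurableSpace X] {μ : Measure X}
    [NormedRing A] [NormedSpace ℝ A] [IsScalarTower ℝ A A] [SMulCommClass ℝ A A]
    {c d : A} (hc : IsUnit c) (hd : IsUnit d) (F : X → A) :
    ∫ x, c * F x * d ∂μ = c * (∫ x, F x ∂μ) * d := by
  by_cases hF : Integrable F μ
  · rw [integral_mul_const_of_integrable (hF.const_mul c), integral_const_mul_of_integrable hF]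
  · have hcFd : ¬Integrable (fun x => c * F x * d) μ := by
      rwa [integrable_mul_const_iff hd, integrable_const_mul_iff hc]
    rw [integral_undef hF, integral_undef hcFd, mul_zero, zero_mul]

theorem norm_eq_one_of_sq_eq_neg_one {R : Type*} [NormedDivisionRing R] {x : R}
    (hx : x ^ 2 = -1) : ‖x‖ = 1 := by
  have hsq : ‖x‖ ^ 2 = 1 := by rw [← norm_pow, hx, norm_neg, norm_one]
  exact (pow_eq_one_iff_of_nonneg (norm_nonneg x) two_ne_zero).1 hsq

namespace Quaternion

-- Mathlib has no `NormedAlgebra ℚ ℍ[ℝ]` instance, which the general lemmas on `exp` require.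
theorem continuous_exp : Continuous (exp : ℍ[ℝ] → ℍ[ℝ]) := by
  let +nondep : NormedAlgebra ℚ ℍ[ℝ] := .restrictScalars ℚ ℝ ℍ[ℝ]
  exact exp_continuous

theorem isUnit_exp (q : ℍ[ℝ]) : IsUnit (exp q) := by
  let +nondep : NormedAlgebra ℚ ℍ[ℝ] := .restrictScalars ℚ ℝ ℍ[ℝ]
  exact NormedSpace.isUnit_exp q

theorem exp_add_smul (q : ℍ[ℝ]) (s t : ℝ) : exp ((s + t) • q) = exp (s • q) * exp (t • q) := by
  let +nondep : NormedAlgebra ℚ ℍ[ℝ] := .restrictScalars ℚ ℝ ℍ[ℝ]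
  rw [add_smul, exp_add_of_commute (((Commute.refl q).smul_left s).smul_right t)]

theorem norm_exp_smul_of_re_eq_zero {q : ℍ[ℝ]} (hq : q.re = 0) (t : ℝ) : ‖exp (t • q)‖ = 1 := by
  simp [hq]

theorem exp_two_pi_smul {q : ℍ[ℝ]} (hq : q.re = 0) (hq1 : ‖q‖ = 1) : exp ((2 * π) • q) = 1 := by
  rw [exp_of_re_eq_zero _ (by simp [hq]), norm_smul, hq1, mul_one,
    Real.norm_of_nonneg two_pi_pos.le, cos_two_pi, sin_two_pi]
  simp

theorem periodic_exp_smul {q : ℍ[ℝ]} (hq : q.re = 0) (hq1 : ‖q‖ = 1) :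
    Periodic (fun t : ℝ => exp (t • q)) (2 * π) := fun t => by
  simp only [exp_add_smul, exp_two_pi_smul hq hq1, mul_one]

end Quaternion

noncomputable def cfmtIntegrand (f g : ℍ[ℝ]) (h : ℝ × ℝ → ℍ[ℝ]) (v : ℝ) (k : ℤ)
    (p : ℝ × ℝ) : ℍ[ℝ] :=
  exp ((-(v * Real.log p.1)) • f) * h p * exp ((-((k : ℝ) * p.2)) • g)

section Integrand

variable {f g : ℍ[ℝ]} {h : ℝ × ℝ → ℍ[ℝ]} {v : ℝ} {k : ℤ}

theorem CFMT_eq_integral_cfmtIntegrand :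
    CFMT f g h v k = (2 * π)⁻¹ • ∫ p, cfmtIntegrand f g h v k p ∂mellinMeasure :=
  rfl

theorem aestronglyMeasurable_cfmtIntegrand {μ : Measure (ℝ × ℝ)}
    (hh : AEStronglyMeasurable h μ) : AEStronglyMeasurable (cfmtIntegrand f g h v k) μ := by
  have hf : Measurable fun p : ℝ × ℝ => -(v * Real.log p.1) := by fun_prop
  have hg : Measurable fun p : ℝ × ℝ => -((k : ℝ) * p.2) := by fun_prop
  exact ((Quaternion.continuous_exp.comp_aestronglyMeasurable
    (hf.aestronglyMeasurable.smul_const f)).mul hh).mul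
      (Quaternion.continuous_exp.comp_aestronglyMeasurable (hg.aestronglyMeasurable.smul_const g))

theorem periodic_cfmtIntegrand (hper : ∀ r θ : ℝ, h (r, θ + 2 * π) = h (r, θ))
    (hgre : g.re = 0) (hg1 : ‖g‖ = 1) (r : ℝ) :
    Periodic (fun θ => cfmtIntegrand f g h v k (r, θ)) (2 * π) := fun θ => by
  have hexp := (Quaternion.periodic_exp_smul hgre hg1).int_mul (-k) (-((k : ℝ) * θ))
  have harg : -((k : ℝ) * θ) + ((-k : ℤ) : ℝ) * (2 * π) = -((k : ℝ) * (θ + 2 * π)) := by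
    push_cast; ring
  simp only [cfmtIntegrand, hper, ← hexp, harg]

theorem cfmtIntegrand_mul_add {a r : ℝ} (ha : 0 < a) (hr : 0 < r) (θ φ : ℝ) :
    cfmtIntegrand f g h v k (a * r, θ + φ) =
      exp ((-(v * Real.log a)) • f) *
        cfmtIntegrand f g (fun p => h (a * p.1, p.2 + φ)) v k (r, θ) *
        exp ((-((k : ℝ) * φ)) • g) := by
  have hf : -(v * Real.log (a * r)) = -(v * Real.log a) + -(v * Real.log r) := by
    rw [Real.log_mul ha.ne' hr.ne']; ring
  have hg : -((k : ℝ) * (θ + φ)) = -((k : ℝ) * θ) + -((k : ℝ) * φ) := by ring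
  simp only [cfmtIntegrand, hf, hg, Quaternion.exp_add_smul, mul_assoc]

end Integrand

theorem cfmt_magnitude_invariance_general (f g : ℍ[ℝ]) (hg : g ^ 2 = -1)
    (hfre : f.re = 0) (hgre : g.re = 0)
    (h : ℝ × ℝ → ℍ[ℝ]) (hper : ∀ r θ : ℝ, h (r, θ + 2 * π) = h (r, θ))
    (hInt : Integrable h mellinMeasure)
    (a : ℝ) (ha : 0 < a) (φ : ℝ) (v : ℝ) (k : ℤ) :
    ‖CFMT f g (fun p => h (a * p.1, p.2 + φ)) v k‖ = ‖CFMT f g h v k‖ := by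
  set m : ℝ × ℝ → ℍ[ℝ] := fun p => h (a * p.1, p.2 + φ)
  set c := exp ((-(v * Real.log a)) • f)
  set d := exp ((-((k : ℝ) * φ)) • g)
  have hrel : CFMT f g h v k = c * CFMT f g m v k * d :=
    calc CFMT f g h v k
        = (2 * π)⁻¹ • ∫ p, cfmtIntegrand f g h v k (a * p.1, p.2 + φ) ∂mellinMeasure := by
          rw [CFMT_eq_integral_cfmtIntegrand, integral_mellinMeasure_comp_mul_add
            (aestronglyMeasurable_cfmtIntegrand hInt.aestronglyMeasurable)
            (periodic_cfmtIntegrand hper hgre (norm_eq_one_of_sq_eq_neg_one hg)) ha]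
      _ = (2 * π)⁻¹ • ∫ p, c * cfmtIntegrand f g m v k p * d ∂mellinMeasure := by
          congr 1
          exact integral_congr_ae (ae_fst_pos_mellinMeasure.mono fun p hp =>
            cfmtIntegrand_mul_add ha hp p.2 φ)
      _ = c * CFMT f g m v k * d := by
          rw [integral_const_mul_mul_const_of_isUnit (Quaternion.isUnit_exp _)
            (Quaternion.isUnit_exp _), CFMT_eq_integral_cfmtIntegrand, mul_smul_comm,
            smul_mul_assoc]
  rw [hrel, norm_mul, norm_mul, Quaternion.norm_exp_smul_of_re_eq_zero hfre,
    Quaternion.norm_exp_smul_of_re_eq_zero hgre, one_mul, mul_one]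

theorem cfmt_magnitude_invariance (f g : ℍ[ℝ]) (hf : f ^ 2 = -1) (hg : g ^ 2 = -1)
    (hfre : f.re = 0) (hgre : g.re = 0)
    (h : ℝ × ℝ → ℍ[ℝ]) (hper : ∀ r θ : ℝ, h (r, θ + 2 * π) = h (r, θ))
    (hInt : Integrable h mellinMeasure)
    (a : ℝ) (ha : 0 < a) (φ : ℝ) (hφ : 0 ≤ φ ∧ φ ≤ 2 * π) (v : ℝ) (k : ℤ) :
    ‖CFMT f g (fun p => h (a * p.1, p.2 + φ)) v k‖ = ‖CFMT f g h v k‖ :=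
  cfmt_magnitude_invariance_general f g hg hfre hgre h hper hInt a ha φ v k
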